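/- Let X ⊂ P^N be a nondegenerate reduced connected scheme whose homogeneous ideal I_X satisfies property N_{2,1} (generated by quadrics), and let q = (1,0,...,0) ∈ X be any point. Let X_q ⊂ P^{N-1} be the inner projection from q, with ideal I_{X_q} = I_X ∩ S. Then h^0(P^{N-1}, I_{X_q}(2)) = h^0(P^N, I_X(2)) − N + dim T_q X, where T_q X is the embedded tangent space of X at q. -/

import Mathlib

open MvPolynomial

/-- The inclusion `S = k[x_1,…,x_N] → R = k[x_0,…,x_N]`. -/
noncomputable def emb (k : Type) [Field k] (N : ℕ) :
    MvPolynomial (Fin N) k →ₐ[k] MvPolynomial (Fin (N + 1)) k :=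
  rename Fin.succ

/-- The space of quadrics in an ideal `I`, i.e. its degree-2 graded piece
(`h⁰(𝒫, I(2))` for the ideal sheaf of the scheme cut out by `I`). -/
noncomputable def quadrics {k : Type} [Field k] {m : ℕ} (I : Ideal (MvPolynomial (Fin m) k)) :
    Submodule k (MvPolynomial (Fin m) k) :=
  (I.restrictScalars k) ⊓ homogeneousSubmodule (Fin m) k 2

lemma degree_add' {σ : Type*} (a b : σ →₀ ℕ) :
    Finsupp.degree (a + b) = Finsupp.degree a + Finsupp.degree b := by
  simp [Finsupp.degree_eq_weight_one, map_add]

/-- Multiplying by a homogeneous element shifts homogeneous components. -/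
lemma hc_mul {k : Type} [Field k] {σ : Type} [DecidableEq σ] (n m : ℕ) (r g : MvPolynomial σ k)
    (hg : g.IsHomogeneous n) :
    homogeneousComponent (m + n) (r * g) = homogeneousComponent m r * g := by
  ext d
  simp only [coeff_homogeneousComponent, coeff_mul]
  by_cases hd : Finsupp.degree d = m + n
  · rw [if_pos hd]
    refine Finset.sum_congr rfl fun x hx => ?_
    rw [Finset.HasAntidiagonal.mem_antidiagonal] at hx
    by_cases hg0 : coeff x.2 g = 0
    · simp [hg0]
    · have hv : Finsupp.degree x.2 = n := by
        rw [Finsupp.degree_eq_weight_one]; exact hg hg0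
      have hu : Finsupp.degree x.1 = m := by
        have := degree_add' x.1 x.2
        rw [hx, hd, hv] at this; omega
      rw [if_pos hu]
  · rw [if_neg hd]
    symm
    refine Finset.sum_eq_zero fun x hx => ?_
    rw [Finset.HasAntidiagonal.mem_antidiagonal] at hx
    by_cases hg0 : coeff x.2 g = 0
    · simp [hg0]
    · have hv : Finsupp.degree x.2 = n := by
        rw [Finsupp.degree_eq_weight_one]; exact hg hg0
      have hu : Finsupp.degree x.1 ≠ m := by
        intro h
        exact hd (by rw [← hx, degree_add', h, hv])
      rw [if_neg hu, zero_mul]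

/-- The degree-2 piece of an ideal generated by quadrics is the `k`-span of the generators. -/
lemma quadrics_span {k : Type} [Field k] {m : ℕ} (G : Set (MvPolynomial (Fin m) k))
    (hG : ∀ g ∈ G, MvPolynomial.IsHomogeneous g 2) :
    quadrics (Ideal.span G) = Submodule.span k G := by
  apply le_antisymm
  · rintro f ⟨hf1, hf2⟩
    simp only [Submodule.restrictScalars_mem, SetLike.mem_coe] at hf1
    obtain ⟨c, hcs, hcsum⟩ := Submodule.mem_span_set.mp hf1
    have hf2' : f ∈ homogeneousSubmodule (Fin m) k 2 := hf2
    have : f = homogeneousComponent 2 f := by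
      rw [homogeneousComponent_of_mem hf2', if_pos rfl]
    rw [this, ← hcsum, map_finsuppSum]
    apply Submodule.finsuppSum_mem
    intro g hg
    have hgG : g ∈ G := hcs (Finsupp.mem_support_iff.mpr hg)
    have : (homogeneousComponent 2) (c g • g) = (coeff 0 (c g)) • g := by
      rw [smul_eq_mul, show (2 : ℕ) = 0 + 2 from rfl, hc_mul 2 0 (c g) g (hG g hgG),
        homogeneousComponent_zero, ← smul_eq_C_mul]
    rw [this]
    exact Submodule.smul_mem _ _ (Submodule.subset_span hgG)
  · rw [Submodule.span_le]
    intro g hg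
    exact ⟨Ideal.subset_span hg, hG g hg⟩

set_option maxHeartbeats 1000000 in
set_option synthInstance.maxHeartbeats 400000 in
/-- Let `X ⊂ ℙ^N` have homogeneous ideal `I_X` generated by quadrics
(property `N_{2,1}`) and let `q = (1,0,…,0) ∈ X` be any point, so that
`I_X = (x_0ℓ_1 − Q_1, …, x_0ℓ_t − Q_t, Q'_1, …, Q'_s)` with the `ℓ_i` linearly independent
linear forms cutting out the embedded tangent space `T_qX` (of projective dimension
`dimT = N − t`).  Then for the inner projection `X_q ⊂ ℙ^{N-1}`, with ideal
`I_{X_q} = I_X ∩ S`, one has `h⁰(I_{X_q}(2)) = h⁰(I_X(2)) − N + dim T_qX`. -/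
theorem inner_projection_quadric_count {k : Type} [Field k] [IsAlgClosed k] {N t s : ℕ}
    (ℓ Q : Fin t → MvPolynomial (Fin N) k) (Q' : Fin s → MvPolynomial (Fin N) k)
    (hℓ1 : ∀ i, (ℓ i).IsHomogeneous 1) (hℓind : LinearIndependent k ℓ)
    (hQ : ∀ i, (Q i).IsHomogeneous 2) (hQ' : ∀ j, (Q' j).IsHomogeneous 2)
    (I : Ideal (MvPolynomial (Fin (N + 1)) k))
    (hI : I = Ideal.span
      ((Set.range fun i => X 0 * emb k N (ℓ i) - emb k N (Q i)) ∪
        (Set.range fun j => emb k N (Q' j))))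
    (dimT : ℕ) (hdimT : (dimT : ℤ) = (N : ℤ) - t) :
    (Module.finrank k (quadrics (I.comap (emb k N).toRingHom)) : ℤ)
      = (Module.finrank k (quadrics I) : ℤ) - N + dimT := by
  classical
  set g1 : Fin t → MvPolynomial (Fin (N + 1)) k :=
    fun i => X 0 * emb k N (ℓ i) - emb k N (Q i) with hg1def
  set g2 : Fin s → MvPolynomial (Fin (N + 1)) k := fun j => emb k N (Q' j) with hg2def
  set G : Set (MvPolynomial (Fin (N + 1)) k) := Set.range g1 ∪ Set.range g2 with hGdef
  -- homogeneity of generators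
  have hembhom : ∀ (n : ℕ) (p : MvPolynomial (Fin N) k),
      p.IsHomogeneous n → (emb k N p).IsHomogeneous n :=
    fun n p hp => hp.rename_isHomogeneous
  have hG2 : ∀ g ∈ G, MvPolynomial.IsHomogeneous g 2 := by
    rintro g (⟨i, rfl⟩ | ⟨j, rfl⟩)
    · simpa using ((isHomogeneous_X k 0).mul (hembhom 1 _ (hℓ1 i))).sub (hembhom 2 _ (hQ i))
    · exact hembhom 2 _ (hQ' j)
  -- the quadrics of I
  have hW : quadrics I = Submodule.span k G := by rw [hI]; exact quadrics_span G hG2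
  -- the coefficient-of-x0 map
  set e := MvPolynomial.finSuccEquiv k N
  set c1 : MvPolynomial (Fin (N + 1)) k →ₗ[k] MvPolynomial (Fin N) k :=
    (Polynomial.lcoeff (MvPolynomial (Fin N) k) 1).restrictScalars k ∘ₗ e.toLinearMap with hc1def
  have hEC : ∀ p : MvPolynomial (Fin N) k, e (emb k N p) = Polynomial.C p := by
    have : e.toAlgHom.comp (emb k N) = Polynomial.CAlgHom (R := k) := by
      apply MvPolynomial.algHom_ext
      intro i
      simp [emb, e, rename_X, finSuccEquiv_X_succ, Polynomial.CAlgHom]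
    intro p
    exact congrArg (fun f => f p) (congrArg DFunLike.coe this)
  have hc1emb : ∀ p : MvPolynomial (Fin N) k, c1 (emb k N p) = 0 := by
    intro p
    simp only [c1, LinearMap.comp_apply, AlgEquiv.toLinearMap_apply, hEC,
      LinearMap.coe_restrictScalars, Polynomial.lcoeff_apply]
    simp [Polynomial.coeff_C]
  have hc1X : ∀ p : MvPolynomial (Fin N) k, c1 (X 0 * emb k N p) = p := by
    intro p
    simp only [c1, LinearMap.comp_apply, AlgEquiv.toLinearMap_apply, map_mul, hEC,
      finSuccEquiv_X_zero, LinearMap.coe_restrictScalars, Polynomial.lcoeff_apply, e]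
    rw [show (1 : ℕ) = 0 + 1 from rfl, Polynomial.coeff_X_mul, Polynomial.coeff_C_zero]
  have hc1g1 : ∀ i, c1 (g1 i) = ℓ i := by
    intro i; rw [hg1def]; simp only [map_sub, hc1X, hc1emb, sub_zero]
  have hc1g2 : ∀ j, c1 (g2 j) = 0 := fun j => hc1emb _
  have hker2 : Submodule.span k (Set.range g2) ≤ LinearMap.ker c1 := by
    rw [Submodule.span_le]; rintro _ ⟨j, rfl⟩; exact hc1g2 j
  -- key kernel lemma
  have keyK : ∀ v ∈ Submodule.span k G, c1 v = 0 → v ∈ Submodule.span k (Set.range g2) := by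
    intro v hv hc
    rw [hGdef, Submodule.span_union] at hv
    obtain ⟨a, ha, b, hb, rfl⟩ := Submodule.mem_sup.mp hv
    obtain ⟨c, hcsum⟩ := (Submodule.mem_span_range_iff_exists_fun k).mp ha
    have hcb : c1 b = 0 := hker2 hb
    have hca : c1 a = 0 := by
      have h0 : c1 a + c1 b = 0 := by rw [← map_add]; exact hc
      simpa [hcb] using h0
    have hsum : ∑ i, c i • ℓ i = 0 := by
      rw [← hca, ← hcsum, map_sum]
      refine Finset.sum_congr rfl fun i _ => ?_
      rw [map_smul, hc1g1]
    have hc0 : ∀ i, c i = 0 := Fintype.linearIndependent_iff.mp hℓind c hsum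
    have ha0 : a = 0 := by
      rw [← hcsum]
      exact Finset.sum_eq_zero fun i _ => by rw [hc0 i, zero_smul]
    rw [ha0, zero_add]
    exact hb
  -- injectivity of emb
  have hinj : Function.Injective (emb k N) :=
    MvPolynomial.rename_injective Fin.succ (Fin.succ_injective N)
  set embL := (emb k N).toLinearMap with hembLdef
  have hrange2 : Submodule.span k (Set.range g2)
      = Submodule.map embL (Submodule.span k (Set.range Q')) := by
    rw [Submodule.map_span]
    congr 1
    rw [← Set.range_comp]
    rfl
  -- computation of quadrics of the contracted ideal
  have hcom : quadrics (I.comap (emb k N).toRingHom) = Submodule.span k (Set.range Q') := by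
    apply le_antisymm
    · rintro p ⟨hp1, hp2⟩
      have hp1' : emb k N p ∈ I := hp1
      have hpW : emb k N p ∈ Submodule.span k G := by
        rw [← hW]; exact ⟨hp1', hembhom 2 p hp2⟩
      have := keyK _ hpW (hc1emb p)
      rw [hrange2] at this
      obtain ⟨q, hq, hqe⟩ := this
      have : q = p := hinj hqe
      rwa [← this]
    · rw [Submodule.span_le]
      rintro _ ⟨j, rfl⟩
      refine ⟨show emb k N (Q' j) ∈ I from ?_, hQ' j⟩
      rw [hI]
      exact Ideal.subset_span (Or.inr ⟨j, rfl⟩)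
  -- rank-nullity setup
  have hGfin : G.Finite := (Set.finite_range g1).union (Set.finite_range g2)
  have hWfd : FiniteDimensional k (quadrics I) := by
    rw [hW]; exact FiniteDimensional.span_of_finite k hGfin
  set f : quadrics I →ₗ[k] MvPolynomial (Fin N) k := c1 ∘ₗ (quadrics I).subtype with hfdef
  -- range of f
  have hrangef : LinearMap.range f = Submodule.span k (Set.range ℓ) := by
    rw [hfdef, LinearMap.range_comp, Submodule.range_subtype, hW, Submodule.map_span]
    apply le_antisymm
    · rw [Submodule.span_le]
      rintro _ ⟨g, hg, rfl⟩
      rcases hg with ⟨i, rfl⟩ | ⟨j, rfl⟩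
      · rw [hc1g1]; exact Submodule.subset_span ⟨i, rfl⟩
      · rw [hc1g2]; exact Submodule.zero_mem _
    · rw [Submodule.span_le]
      rintro _ ⟨i, rfl⟩
      rw [← hc1g1 i]
      exact Submodule.subset_span ⟨g1 i, Or.inl ⟨i, rfl⟩, rfl⟩
  -- kernel of f
  have hkerf : Submodule.map (quadrics I).subtype (LinearMap.ker f)
      = Submodule.span k (Set.range g2) := by
    apply le_antisymm
    · rintro _ ⟨⟨v, hvW⟩, hvk, rfl⟩
      have hvs : v ∈ Submodule.span k G := by rw [← hW]; exact hvW
      exact keyK v hvs hvk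
    · intro b hb
      have hbW : b ∈ quadrics I := by
        rw [hW, hGdef, Submodule.span_union]
        exact Submodule.mem_sup_right hb
      exact ⟨⟨b, hbW⟩, hker2 hb, rfl⟩
  -- finrank computations
  have hrank : Module.finrank k (LinearMap.range f) + Module.finrank k (LinearMap.ker f)
      = Module.finrank k (quadrics I) := LinearMap.finrank_range_add_finrank_ker f
  have hr1 : Module.finrank k (LinearMap.range f) = t := by
    rw [hrangef, finrank_span_eq_card hℓind, Fintype.card_fin]
  have hr2 : Module.finrank k (LinearMap.ker f)
      = Module.finrank k (Submodule.span k (Set.range Q')) := by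
    have e1 : (LinearMap.ker f) ≃ₗ[k] Submodule.map (quadrics I).subtype (LinearMap.ker f) :=
      Submodule.equivMapOfInjective (quadrics I).subtype (Submodule.injective_subtype _) _
    have e2 : (Submodule.span k (Set.range Q')) ≃ₗ[k]
        Submodule.map embL (Submodule.span k (Set.range Q')) :=
      Submodule.equivMapOfInjective embL hinj _
    rw [e1.finrank_eq, hkerf, hrange2, ← e2.finrank_eq]
  have hr3 : Module.finrank k (quadrics (I.comap (emb k N).toRingHom))
      = Module.finrank k (Submodule.span k (Set.range Q')) := by rw [hcom]
  rw [hr1, hr2] at hrank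
  rw [hr3, ← hrank]
  push_cast
  omega
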